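/- arXiv:2210.00644 — 2 statements merged into one kernel-verified Lean document; each statement's English description precedes it below -/
import Mathlib

section
/- Let ρ > 0, let 𝒜 = [α̲, ᾱ] ⊂ ℝ be a nonempty closed interval, and let A be a real n×n matrix, B : ℝ → (real n×m matrices) a matrix-valued function, C a real p×n matrix, D a real p×m matrix, M a symmetric real p×p matrix, P a symmetric positive definite real n×n matrix, and λ ≥ 0. Suppose that for every α ∈ 𝒜 the linear matrix inequality [[AᵀPA − ρ²P, AᵀPB(α)],[B(α)ᵀPA, B(α)ᵀPB(α)]] + λ·[C D]ᵀ M [C D] ⪯ 0 holds. Let α : ℕ → ℝ be any sequence with α_k ∈ 𝒜 for all k, and let x : ℕ → ℝⁿ, u : ℕ → ℝᵐ, z : ℕ → ℝᵖ satisfy x_{k+1} = A x_k + B(α_k) u_k and z_k = C x_k + D u_k for all k, with the ρ-hard IQC sum condition: for every N, Σ_{k=0}^{N} ρ^{−2k} z_kᵀ M z_k ≥ 0. Then for all k ≥ 0, x_kᵀ P x_k ≤ ρ^{2k} x₀ᵀ P x₀, and consequently ‖x_k‖ ≤ √(cond(P)) · ρ^k · ‖x₀‖. -/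
/-!
Evaluating the LMI at the stacked vector `(x_k, u_k)` gives the dissipation inequality
`V(x_{k+1}) ≤ ρ² V(x_k) - λ z_kᵀ M z_k` for the storage `V(x) = xᵀ P x`. After scaling by
`ρ^{-2(k+1)}` the storage terms telescope, and the supply terms add up to `λ ρ⁻²` times a
partial IQC sum, which is nonnegative; hence `ρ^{-2k} V(x_k) ≤ V(x_0)`. The norm bound follows
from `λ_min(P) ‖x‖² ≤ xᵀ P x ≤ λ_max(P) ‖x‖²`.
-/

open Matrix

lemma dotProduct_transpose_mul_mul_mulVec {ι κ ν : Type*} [Fintype ι] [Fintype κ] [Fintype ν]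
    (E : Matrix ν ι ℝ) (P : Matrix ν ν ℝ) (F : Matrix ν κ ℝ) (v : ι → ℝ) (w : κ → ℝ) :
    v ⬝ᵥ ((Eᵀ * P * F) *ᵥ w) = (E *ᵥ v) ⬝ᵥ (P *ᵥ (F *ᵥ w)) := by
  rw [← mulVec_mulVec, ← mulVec_mulVec, dotProduct_mulVec, vecMul_transpose]

lemma fromBlocks_eq_fromCols_transpose_mul_mul_sub {ι κ : Type*} [Fintype ι]
    (A : Matrix ι ι ℝ) (B : Matrix ι κ ℝ) (P : Matrix ι ι ℝ) (r : ℝ) :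
    fromBlocks (Aᵀ * P * A - r • P) (Aᵀ * P * B) (Bᵀ * P * A) (Bᵀ * P * B) =
      (fromCols A B)ᵀ * P * fromCols A B - fromBlocks (r • P) 0 0 0 := by
  rw [transpose_fromCols, fromRows_mul, fromRows_mul_fromCols]
  ext (i | i) (j | j) <;> simp

lemma lmi_quadForm_sumElim {ι κ ν : Type*} [Fintype ι] [Fintype κ] [Fintype ν]
    (A : Matrix ι ι ℝ) (B : Matrix ι κ ℝ) (C : Matrix ν ι ℝ) (D : Matrix ν κ ℝ)
    (M : Matrix ν ν ℝ) (P : Matrix ι ι ℝ) (r lam : ℝ) (x : ι → ℝ) (u : κ → ℝ) :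
    Sum.elim x u ⬝ᵥ ((fromBlocks (Aᵀ * P * A - r • P) (Aᵀ * P * B) (Bᵀ * P * A) (Bᵀ * P * B)
        + lam • ((fromCols C D)ᵀ * M * fromCols C D)) *ᵥ Sum.elim x u) =
      (A *ᵥ x + B *ᵥ u) ⬝ᵥ (P *ᵥ (A *ᵥ x + B *ᵥ u)) - r * (x ⬝ᵥ (P *ᵥ x))
        + lam * ((C *ᵥ x + D *ᵥ u) ⬝ᵥ (M *ᵥ (C *ᵥ x + D *ᵥ u))) := by
  rw [fromBlocks_eq_fromCols_transpose_mul_mul_sub, add_mulVec, sub_mulVec, smul_mulVec,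
    dotProduct_add, dotProduct_sub, dotProduct_smul, dotProduct_transpose_mul_mul_mulVec,
    dotProduct_transpose_mul_mul_mulVec, fromCols_mulVec_sumElim, fromCols_mulVec_sumElim,
    fromBlocks_mulVec, sumElim_dotProduct_sumElim]
  simp [smul_mulVec, smul_eq_mul]

lemma le_pow_mul_of_dissipation {V w : ℕ → ℝ} {r lam : ℝ} (hr : 0 < r) (hlam : 0 ≤ lam)
    (hstep : ∀ k, V (k + 1) ≤ r * V k - lam * w k)
    (hsupply : ∀ N, 0 ≤ ∑ k ∈ Finset.range N, (r ^ k)⁻¹ * w k) (N : ℕ) :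
    V N ≤ r ^ N * V 0 := by
  have hdecr : ∀ k, (r ^ (k + 1))⁻¹ * V (k + 1) - (r ^ k)⁻¹ * V k ≤
      -(lam / r) * ((r ^ k)⁻¹ * w k) := fun k =>
    calc (r ^ (k + 1))⁻¹ * V (k + 1) - (r ^ k)⁻¹ * V k
        ≤ (r ^ (k + 1))⁻¹ * (r * V k - lam * w k) - (r ^ k)⁻¹ * V k := by
          gcongr; exact hstep k
      _ = -(lam / r) * ((r ^ k)⁻¹ * w k) := by
          field_simp
          ring
  have htele : (r ^ N)⁻¹ * V N - V 0 ≤ -(lam / r) * ∑ k ∈ Finset.range N, (r ^ k)⁻¹ * w k :=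
    calc (r ^ N)⁻¹ * V N - V 0
        = ∑ k ∈ Finset.range N, ((r ^ (k + 1))⁻¹ * V (k + 1) - (r ^ k)⁻¹ * V k) := by
          simpa using (Finset.sum_range_sub (fun k => (r ^ k)⁻¹ * V k) N).symm
      _ ≤ ∑ k ∈ Finset.range N, -(lam / r) * ((r ^ k)⁻¹ * w k) :=
          Finset.sum_le_sum fun k _ => hdecr k
      _ = _ := (Finset.mul_sum ..).symm
  have hsupply_term : 0 ≤ (lam / r) * ∑ k ∈ Finset.range N, (r ^ k)⁻¹ * w k :=
    mul_nonneg (div_nonneg hlam hr.le) (hsupply N)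
  rw [← inv_mul_le_iff₀ (pow_pos hr N)]
  linarith

lemma Matrix.star_unitary_mulVec_dotProduct_self {ι : Type*} [Fintype ι] [DecidableEq ι]
    (U : unitaryGroup ι ℝ) (x : ι → ℝ) :
    (star (U : Matrix ι ι ℝ) *ᵥ x) ⬝ᵥ (star (U : Matrix ι ι ℝ) *ᵥ x) = x ⬝ᵥ x := by
  have hU : (star (U : Matrix ι ι ℝ))ᵀ = U := by
    rw [star_eq_conjTranspose, conjTranspose_eq_transpose_of_trivial, transpose_transpose]
  rw [dotProduct_comm, dotProduct_mulVec, ← mulVec_transpose, hU, mulVec_mulVec,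
    mem_unitaryGroup_iff.mp U.2, one_mulVec]

namespace Matrix.IsHermitian

variable {ι : Type*} [Fintype ι] [DecidableEq ι] {P : Matrix ι ι ℝ}

lemma dotProduct_mulVec_eq_sum_eigenvalues (hP : P.IsHermitian) (x : ι → ℝ) :
    x ⬝ᵥ (P *ᵥ x) =
      ∑ i, hP.eigenvalues i * (star (hP.eigenvectorUnitary : Matrix ι ι ℝ) *ᵥ x) i ^ 2 := by
  set U : Matrix ι ι ℝ := ↑hP.eigenvectorUnitary
  have hxU : x ᵥ* U = star U *ᵥ x := by
    rw [← mulVec_transpose, star_eq_conjTranspose, conjTranspose_eq_transpose_of_trivial]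
  conv_lhs => rw [hP.spectral_theorem, Unitary.conjStarAlgAut_apply]
  rw [← mulVec_mulVec, ← mulVec_mulVec, dotProduct_mulVec, hxU]
  simp only [dotProduct, mulVec_diagonal, Function.comp_apply, RCLike.ofReal_real_eq_id, id]
  exact Finset.sum_congr rfl fun i _ => by ring

lemma iInf_eigenvalues_mul_le (hP : P.IsHermitian) (x : ι → ℝ) :
    (⨅ i, hP.eigenvalues i) * (x ⬝ᵥ x) ≤ x ⬝ᵥ (P *ᵥ x) := by
  rw [hP.dotProduct_mulVec_eq_sum_eigenvalues,
    ← star_unitary_mulVec_dotProduct_self hP.eigenvectorUnitary x, dotProduct, Finset.mul_sum]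
  simp only [← sq]
  gcongr with i
  exact ciInf_le (Finite.bddBelow_range _) i

lemma le_iSup_eigenvalues_mul (hP : P.IsHermitian) (x : ι → ℝ) :
    x ⬝ᵥ (P *ᵥ x) ≤ (⨆ i, hP.eigenvalues i) * (x ⬝ᵥ x) := by
  rw [hP.dotProduct_mulVec_eq_sum_eigenvalues,
    ← star_unitary_mulVec_dotProduct_self hP.eigenvectorUnitary x, dotProduct, Finset.mul_sum]
  simp only [← sq]
  gcongr with i
  exact le_ciSup (Finite.bddAbove_range _) i

end Matrix.IsHermitian

lemma Matrix.PosDef.sqrt_dotProduct_self_le {ι : Type*} [Fintype ι] [DecidableEq ι]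
    {P : Matrix ι ι ℝ} (hP : P.PosDef) {x y : ι → ℝ} {t : ℝ} (ht : 0 ≤ t)
    (h : y ⬝ᵥ (P *ᵥ y) ≤ t ^ 2 * (x ⬝ᵥ (P *ᵥ x))) :
    √(y ⬝ᵥ y) ≤ √((⨆ i, hP.1.eigenvalues i) / (⨅ i, hP.1.eigenvalues i)) * t * √(x ⬝ᵥ x) := by
  rcases isEmpty_or_nonempty ι with hι | hι
  · simp [dotProduct]
  set emin := ⨅ i, hP.1.eigenvalues i
  set emax := ⨆ i, hP.1.eigenvalues i
  have hemin : 0 < emin := by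
    obtain ⟨i, hi⟩ := exists_eq_ciInf_of_finite (f := hP.1.eigenvalues)
    exact (hP.eigenvalues_pos i).trans_eq hi
  have hemax : 0 ≤ emax :=
    hemin.le.trans (ciInf_le_ciSup (Finite.bddBelow_range _) (Finite.bddAbove_range _))
  have hyy : emin * (y ⬝ᵥ y) ≤ t ^ 2 * (emax * (x ⬝ᵥ x)) :=
    calc emin * (y ⬝ᵥ y) ≤ y ⬝ᵥ (P *ᵥ y) := hP.1.iInf_eigenvalues_mul_le y
      _ ≤ t ^ 2 * (x ⬝ᵥ (P *ᵥ x)) := h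
      _ ≤ t ^ 2 * (emax * (x ⬝ᵥ x)) := by gcongr; exact hP.1.le_iSup_eigenvalues_mul x
  rw [Real.sqrt_le_iff]
  refine ⟨by positivity, ?_⟩
  rw [mul_pow, mul_pow, Real.sq_sqrt (div_nonneg hemax hemin.le),
    Real.sq_sqrt (by simpa using dotProduct_star_self_nonneg x), div_mul_eq_mul_div,
    div_mul_eq_mul_div, le_div_iff₀ hemin]
  linarith

theorem stmt_1_general {n m p : ℕ} (ρ : ℝ) (hρ : 0 < ρ)
    (αlo αhi : ℝ)
    (A : Matrix (Fin n) (Fin n) ℝ) (B : ℝ → Matrix (Fin n) (Fin m) ℝ)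
    (C : Matrix (Fin p) (Fin n) ℝ) (D : Matrix (Fin p) (Fin m) ℝ)
    (M : Matrix (Fin p) (Fin p) ℝ)
    (P : Matrix (Fin n) (Fin n) ℝ) (hP : P.PosDef)
    (lam : ℝ) (hlam : 0 ≤ lam)
    (hLMI : ∀ α ∈ Set.Icc αlo αhi, ∀ v : Fin n ⊕ Fin m → ℝ,
      v ⬝ᵥ ((Matrix.fromBlocks (Aᵀ * P * A - ρ ^ 2 • P) (Aᵀ * P * B α)
              ((B α)ᵀ * P * A) ((B α)ᵀ * P * B α)
            + lam • ((Matrix.fromCols C D)ᵀ * M * Matrix.fromCols C D)) *ᵥ v) ≤ 0)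
    (α : ℕ → ℝ) (hα : ∀ k, α k ∈ Set.Icc αlo αhi)
    (x : ℕ → Fin n → ℝ) (u : ℕ → Fin m → ℝ) (z : ℕ → Fin p → ℝ)
    (hx : ∀ k, x (k + 1) = A *ᵥ x k + B (α k) *ᵥ u k)
    (hz : ∀ k, z k = C *ᵥ x k + D *ᵥ u k)
    (hIQC : ∀ N : ℕ, 0 ≤ ∑ k ∈ Finset.range (N + 1),
      (ρ ^ (2 * k))⁻¹ * (z k ⬝ᵥ (M *ᵥ z k))) :
    ∀ k : ℕ,
      x k ⬝ᵥ (P *ᵥ x k) ≤ ρ ^ (2 * k) * (x 0 ⬝ᵥ (P *ᵥ x 0)) ∧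
      Real.sqrt (x k ⬝ᵥ x k) ≤
        Real.sqrt ((⨆ i, hP.1.eigenvalues i) / (⨅ i, hP.1.eigenvalues i)) * ρ ^ k *
          Real.sqrt (x 0 ⬝ᵥ x 0) := by
  set V : ℕ → ℝ := fun k => x k ⬝ᵥ (P *ᵥ x k)
  have hstep : ∀ k, V (k + 1) ≤ ρ ^ 2 * V k - lam * (z k ⬝ᵥ (M *ᵥ z k)) := by
    intro k
    have hLMIk := hLMI (α k) (hα k) (Sum.elim (x k) (u k))
    rw [lmi_quadForm_sumElim, ← hx k, ← hz k] at hLMIk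
    linarith
  have hsupply : ∀ N, 0 ≤ ∑ k ∈ Finset.range N, ((ρ ^ 2) ^ k)⁻¹ * (z k ⬝ᵥ (M *ᵥ z k)) := by
    rintro (_ | N)
    · simp
    · simpa only [← pow_mul] using hIQC N
  have hV : ∀ k, V k ≤ ρ ^ (2 * k) * V 0 := fun k => by
    simpa only [← pow_mul] using le_pow_mul_of_dissipation (pow_pos hρ 2) hlam hstep hsupply k
  intro k
  refine ⟨hV k, hP.sqrt_dotProduct_self_le (pow_nonneg hρ.le k) ?_⟩
  simpa only [← pow_mul'] using hV k

/-- Theorem 2 of the paper: convergence certificate for the LPV system, where the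
IQC-based LMI holds at every parameter value α in the interval 𝒜 = [α̲, ᾱ], with a
constant storage matrix P. The Euclidean norm is written as `Real.sqrt (x ⬝ᵥ x)` and
`cond P = λ_max(P) / λ_min(P)` via the eigenvalues of the positive definite matrix `P`. -/
theorem stmt_1 {n m p : ℕ} (ρ : ℝ) (hρ : 0 < ρ)
    (αlo αhi : ℝ) (hA : αlo ≤ αhi)
    (A : Matrix (Fin n) (Fin n) ℝ) (B : ℝ → Matrix (Fin n) (Fin m) ℝ)
    (C : Matrix (Fin p) (Fin n) ℝ) (D : Matrix (Fin p) (Fin m) ℝ)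
    (M : Matrix (Fin p) (Fin p) ℝ) (hM : M.IsSymm)
    (P : Matrix (Fin n) (Fin n) ℝ) (hPsymm : P.IsSymm) (hP : P.PosDef)
    (lam : ℝ) (hlam : 0 ≤ lam)
    (hLMI : ∀ α ∈ Set.Icc αlo αhi, ∀ v : Fin n ⊕ Fin m → ℝ,
      v ⬝ᵥ ((Matrix.fromBlocks (Aᵀ * P * A - ρ ^ 2 • P) (Aᵀ * P * B α)
              ((B α)ᵀ * P * A) ((B α)ᵀ * P * B α)
            + lam • ((Matrix.fromCols C D)ᵀ * M * Matrix.fromCols C D)) *ᵥ v) ≤ 0)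
    (α : ℕ → ℝ) (hα : ∀ k, α k ∈ Set.Icc αlo αhi)
    (x : ℕ → Fin n → ℝ) (u : ℕ → Fin m → ℝ) (z : ℕ → Fin p → ℝ)
    (hx : ∀ k, x (k + 1) = A *ᵥ x k + B (α k) *ᵥ u k)
    (hz : ∀ k, z k = C *ᵥ x k + D *ᵥ u k)
    (hIQC : ∀ N : ℕ, 0 ≤ ∑ k ∈ Finset.range (N + 1),
      (ρ ^ (2 * k))⁻¹ * (z k ⬝ᵥ (M *ᵥ z k))) :
    ∀ k : ℕ,
      x k ⬝ᵥ (P *ᵥ x k) ≤ ρ ^ (2 * k) * (x 0 ⬝ᵥ (P *ᵥ x 0)) ∧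
      Real.sqrt (x k ⬝ᵥ x k) ≤
        Real.sqrt ((⨆ i, hP.1.eigenvalues i) / (⨅ i, hP.1.eigenvalues i)) * ρ ^ k *
          Real.sqrt (x 0 ⬝ᵥ x 0) :=
  stmt_1_general ρ hρ αlo αhi A B C D M P hP lam hlam hLMI α hα x u z hx hz hIQC
end

section
/- Let 0 < m ≤ L and let f : ℝⁿ → ℝ be differentiable, m-strongly convex, with L-Lipschitz continuous gradient, with minimizer x* (so ∇f(x*) = 0). Let ξ : ℕ → ℝⁿ be the gradient descent iterates with step size α = 1/L, i.e., ξ_{k+1} = ξ_k − (1/L)∇f(ξ_k). Then for all k ≥ 0, ‖ξ_k − x*‖ ≤ (1 − 1/κ)^k · ‖ξ₀ − x*‖, where κ = L/m is the condition number of f. -/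
open scoped RealInnerProductSpace
open Set Filter Topology

/-!
Write `f = h + (m/2)‖·‖²`. Strong convexity of `f` makes `h` convex, and the quadratic upper
bound coming from the `L`-Lipschitz gradient makes `h` `(L - m)`-smooth, so `∇h` is
`1/(L - m)`-cocoercive. Then `L • (x - L⁻¹ ∇f x) = (L - m) • x - ∇h x` is `(L - m)`-Lipschitz,
i.e. the gradient step is a `(1 - m/L)`-contraction with fixed point `x*`.
-/

section

variable {E : Type*} [NormedAddCommGroup E] [InnerProductSpace ℝ E]

theorem le_add_inner_add_sq_of_lipschitz_gradient [CompleteSpace E] {f : E → ℝ} {f' : E → E}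
    {L : ℝ} (hf : ∀ x, HasGradientAt f (f' x) x) (hlip : ∀ x y, ‖f' y - f' x‖ ≤ L * ‖y - x‖)
    (x y : E) : f y ≤ f x + ⟪f' x, y - x⟫ + (L / 2) * ‖y - x‖ ^ 2 := by
  set v := y - x
  have hφ : ∀ t : ℝ, HasDerivAt (fun t : ℝ => f (x + t • v)) ⟪f' (x + t • v), v⟫ t := fun t =>
    (hf _).hasFDerivAt.comp_hasDerivAt t
      ((((hasDerivAt_id t).smul_const v).const_add x).congr_deriv (one_smul ℝ v))
  have hB : ∀ t : ℝ, HasDerivAt (fun t : ℝ => f x + t * ⟪f' x, v⟫ + L / 2 * t ^ 2 * ‖v‖ ^ 2)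
      (⟪f' x, v⟫ + L * t * ‖v‖ ^ 2) t := fun t =>
    ((((hasDerivAt_id t).mul_const ⟪f' x, v⟫).const_add (f x)).add
      (((hasDerivAt_pow 2 t).const_mul (L / 2)).mul_const (‖v‖ ^ 2))).congr_deriv
      (by simp only [one_mul, Nat.cast_ofNat, Nat.add_one_sub_one, pow_one]; ring)
  have hbound : ∀ t ∈ Ico (0 : ℝ) 1, ⟪f' (x + t • v), v⟫ ≤ ⟪f' x, v⟫ + L * t * ‖v‖ ^ 2 := by
    rintro t ⟨ht, -⟩
    calc ⟪f' (x + t • v), v⟫ = ⟪f' x, v⟫ + ⟪f' (x + t • v) - f' x, v⟫ := by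
          rw [inner_sub_left]; ring
      _ ≤ ⟪f' x, v⟫ + L * ‖t • v‖ * ‖v‖ := by
          gcongr
          refine (real_inner_le_norm _ _).trans (mul_le_mul_of_nonneg_right ?_ (norm_nonneg v))
          simpa using hlip x (x + t • v)
      _ = ⟪f' x, v⟫ + L * t * ‖v‖ ^ 2 := by
          rw [norm_smul, Real.norm_of_nonneg ht]; ring
  have := image_le_of_deriv_right_le_deriv_boundary
    (fun t _ => (hφ t).continuousAt.continuousWithinAt) (fun t _ => (hφ t).hasDerivWithinAt)
    (by simp) (fun t _ => (hB t).continuousAt.continuousWithinAt)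
    (fun t _ => (hB t).hasDerivWithinAt) hbound (right_mem_Icc.2 zero_le_one)
  simpa [v] using this

theorem sq_norm_sub_le_mul_inner_of_quadratic_bounds_of_pos {f : E → ℝ} {g : E → E} {C : ℝ}
    (hC : 0 < C)
    (hlower : ∀ x y, f x + ⟪g x, y - x⟫ ≤ f y)
    (hupper : ∀ x y, f y ≤ f x + ⟪g x, y - x⟫ + (C / 2) * ‖y - x‖ ^ 2) (x y : E) :
    ‖g x - g y‖ ^ 2 ≤ C * ⟪g x - g y, x - y⟫ := by
  set u := g x - g y
  have hu : ⟪g x, u⟫ - ⟪g y, u⟫ = ‖u‖ ^ 2 := by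
    rw [← inner_sub_left, real_inner_self_eq_norm_sq]
  have hxy : ⟪u, x - y⟫ = -⟪g x, y - x⟫ - ⟪g y, x - y⟫ := by
    simp only [u, inner_sub_left, inner_sub_right]
    ring
  have key (t : ℝ) : 2 * t * ‖u‖ ^ 2 ≤ ⟪u, x - y⟫ + C * t ^ 2 * ‖u‖ ^ 2 := by
    have h1 := (hlower x (y + t • u)).trans (hupper y (y + t • u))
    have h2 := (hlower y (x - t • u)).trans (hupper x (x - t • u))
    rw [show y + t • u - x = (y - x) + t • u by abel, add_sub_cancel_left, inner_add_right] at h1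
    rw [show x - t • u - y = (x - y) - t • u by abel, sub_sub_cancel_left, inner_sub_right,
      inner_neg_right, norm_neg] at h2
    simp only [real_inner_smul_right, norm_smul, mul_pow, Real.norm_eq_abs, sq_abs] at h1 h2
    linear_combination h1 + h2 - 2 * t * hu - hxy
  calc ‖u‖ ^ 2 = C * (2 * C⁻¹ * ‖u‖ ^ 2 - C * C⁻¹ ^ 2 * ‖u‖ ^ 2) := by
        field_simp
        ring
    _ ≤ C * ⟪u, x - y⟫ := by
        gcongr
        linarith [key C⁻¹]

theorem sq_norm_sub_le_mul_inner_of_quadratic_bounds {f : E → ℝ} {g : E → E} {C : ℝ}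
    (hC : 0 ≤ C)
    (hlower : ∀ x y, f x + ⟪g x, y - x⟫ ≤ f y)
    (hupper : ∀ x y, f y ≤ f x + ⟪g x, y - x⟫ + (C / 2) * ‖y - x‖ ^ 2) (x y : E) :
    ‖g x - g y‖ ^ 2 ≤ C * ⟪g x - g y, x - y⟫ := by
  -- the choice `t = 1 / C` of the positive case breaks down at `C = 0`; let the constant decrease
  have key : ∀ ε > 0, ‖g x - g y‖ ^ 2 ≤ (C + ε) * ⟪g x - g y, x - y⟫ := fun ε hε =>
    sq_norm_sub_le_mul_inner_of_quadratic_bounds_of_pos (by positivity) hlower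
      (fun a b => (hupper a b).trans (by gcongr; linarith)) x y
  have hlim : Tendsto (fun ε : ℝ => (C + ε) * ⟪g x - g y, x - y⟫) (𝓝[>] 0)
      (𝓝 (C * ⟪g x - g y, x - y⟫)) := by
    have : Continuous fun ε : ℝ => (C + ε) * ⟪g x - g y, x - y⟫ := by fun_prop
    simpa using (this.tendsto 0).mono_left nhdsWithin_le_nhds
  exact ge_of_tendsto hlim (eventually_nhdsWithin_of_forall key)

theorem norm_smul_sub_le_of_sq_norm_le_mul_inner {C : ℝ} {u d : E} (hC : 0 ≤ C)
    (h : ‖u‖ ^ 2 ≤ C * ⟪u, d⟫) : ‖C • d - u‖ ≤ C * ‖d‖ := by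
  refine (pow_le_pow_iff_left₀ (norm_nonneg _) (by positivity) two_ne_zero).1 ?_
  calc ‖C • d - u‖ ^ 2 = C ^ 2 * ‖d‖ ^ 2 - 2 * (C * ⟪u, d⟫) + ‖u‖ ^ 2 := by
        rw [norm_sub_sq_real, norm_smul, real_inner_smul_left, real_inner_comm,
          Real.norm_of_nonneg hC]
        ring
    _ ≤ (C * ‖d‖) ^ 2 := by nlinarith [sq_nonneg ‖u‖]

theorem norm_gradient_step_sub_le [CompleteSpace E] {f : E → ℝ} {f' : E → E} {m L : ℝ}
    (hL : 0 < L) (hmL : m ≤ L) (hf : ∀ x, HasGradientAt f (f' x) x)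
    (hsc : ∀ x y, f x + ⟪f' x, y - x⟫ + (m / 2) * ‖y - x‖ ^ 2 ≤ f y)
    (hlip : ∀ x y, ‖f' y - f' x‖ ≤ L * ‖y - x‖) (x y : E) :
    ‖(x - (1 / L) • f' x) - (y - (1 / L) • f' y)‖ ≤ (1 - m / L) * ‖x - y‖ := by
  set h : E → ℝ := fun z => f z - (m / 2) * ‖z‖ ^ 2
  set g : E → E := fun z => f' z - m • z
  have hgap (a b : E) : h b - (h a + ⟪g a, b - a⟫)
      = f b - (f a + ⟪f' a, b - a⟫) - (m / 2) * ‖b - a‖ ^ 2 := by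
    simp only [h, g, inner_sub_left, inner_sub_right, real_inner_smul_left, norm_sub_sq_real,
      real_inner_self_eq_norm_sq, real_inner_comm a b]
    ring
  have hcoco : ‖g x - g y‖ ^ 2 ≤ (L - m) * ⟪g x - g y, x - y⟫ :=
    sq_norm_sub_le_mul_inner_of_quadratic_bounds (f := h) (sub_nonneg.2 hmL)
      (fun a b => by linarith [hgap a b, hsc a b])
      (fun a b => by linarith [hgap a b, le_add_inner_add_sq_of_lipschitz_gradient hf hlip a b])
      x y
  have hstep : (x - (1 / L) • f' x) - (y - (1 / L) • f' y)
      = (1 / L) • ((L - m) • (x - y) - (g x - g y)) := by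
    rw [one_div, eq_inv_smul_iff₀ hL.ne']
    simp only [g, smul_sub, smul_smul, mul_inv_cancel₀ hL.ne', one_smul]
    module
  calc ‖(x - (1 / L) • f' x) - (y - (1 / L) • f' y)‖
      ≤ 1 / L * ((L - m) * ‖x - y‖) := by
        rw [hstep, norm_smul, Real.norm_of_nonneg (by positivity)]
        gcongr
        exact norm_smul_sub_le_of_sq_norm_le_mul_inner (sub_nonneg.2 hmL) hcoco
    _ = (1 - m / L) * ‖x - y‖ := by
        field_simp

end

/-- The rate bound ρ = 1 − m/L = 1 − 1/κ (eq. (13) of the paper) for gradient descent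
with the standard step size α = 1/L, where κ = L/m is the condition number. -/
theorem stmt_10 {n : ℕ} (m L : ℝ) (hm : 0 < m) (hmL : m ≤ L)
    (f : EuclideanSpace ℝ (Fin n) → ℝ)
    (f' : EuclideanSpace ℝ (Fin n) → EuclideanSpace ℝ (Fin n))
    (hdiff : ∀ x, HasGradientAt f (f' x) x)
    (hsc : ∀ x y, f y ≥ f x + ⟪f' x, y - x⟫ + (m / 2) * ‖y - x‖ ^ 2)
    (hlip : ∀ x y, ‖f' y - f' x‖ ≤ L * ‖y - x‖)
    (xstar : EuclideanSpace ℝ (Fin n)) (hstar : f' xstar = 0)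
    (ξ : ℕ → EuclideanSpace ℝ (Fin n))
    (hξ : ∀ k, ξ (k + 1) = ξ k - (1 / L) • f' (ξ k)) :
    ∀ k : ℕ, ‖ξ k - xstar‖ ≤ (1 - 1 / (L / m)) ^ k * ‖ξ 0 - xstar‖ := by
  intro k
  have hL : 0 < L := hm.trans_le hmL
  rw [one_div_div]
  refine le_geom (u := fun k => ‖ξ k - xstar‖) (sub_nonneg.2 ((div_le_one hL).2 hmL)) k
    fun j _ => ?_
  simpa [hξ, hstar] using norm_gradient_step_sub_le hL hmL hdiff hsc hlip (ξ j) xstar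
end
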